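/- arXiv:math/0511536 — 6 statements merged into one kernel-verified Lean document; each statement's English description precedes it below -/
import Mathlib

section
/- For every integer b ≥ 2, λ_{b+1} - λ_b = ∫_{[0,1]} b (1-x)^{b-1} dΛ(x). -/
open MeasureTheory Finset Filter

/-- `lamBK μ b k` is `λ_{b,k} = ∫_{[0,1]} x^{k-2} (1-x)^{b-k} dΛ(x)`. -/
noncomputable def lamBK (μ : Measure ℝ) (b k : ℕ) : ℝ :=
  ∫ x in Set.Icc (0:ℝ) 1, x ^ (k - 2) * (1 - x) ^ (b - k) ∂μ

/-- `lamB μ b` is `λ_b = Σ_{k=2}^b C(b,k) λ_{b,k}`. -/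
noncomputable def lamB (μ : Measure ℝ) (b : ℕ) : ℝ :=
  ∑ k ∈ Finset.Icc 2 b, (b.choose k : ℝ) * lamBK μ b k

/-- `gamB μ b` is `γ_b = Σ_{k=2}^b C(b,k) (k-1) λ_{b,k}`. -/
noncomputable def gamB (μ : Measure ℝ) (b : ℕ) : ℝ :=
  ∑ k ∈ Finset.Icc 2 b, (b.choose k : ℝ) * ((k : ℝ) - 1) * lamBK μ b k

lemma aux_integrable (μ : Measure ℝ) [IsFiniteMeasure μ] (n m : ℕ) :
    IntegrableOn (fun x : ℝ => x ^ n * (1 - x) ^ m) (Set.Icc (0:ℝ) 1) μ := by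
  exact (by continuity : Continuous fun x : ℝ => x ^ n * (1 - x) ^ m).integrableOn_Icc

lemma aux_key (b : ℕ) (hb : 1 ≤ b) (x : ℝ) :
    x ^ 2 * ∑ k ∈ Finset.Icc 2 b, (b.choose k : ℝ) * (x ^ (k - 2) * (1 - x) ^ (b - k))
      = 1 - (1 - x) ^ b - b * x * (1 - x) ^ (b - 1) := by
  have h1 : x ^ 2 * ∑ k ∈ Finset.Icc 2 b, (b.choose k : ℝ) * (x ^ (k - 2) * (1 - x) ^ (b - k))
      = ∑ k ∈ Finset.Icc 2 b, x ^ k * (1 - x) ^ (b - k) * (b.choose k : ℝ) := by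
    rw [Finset.mul_sum]
    refine Finset.sum_congr rfl fun k hk => ?_
    have hk2 : 2 ≤ k := (Finset.mem_Icc.mp hk).1
    have : x ^ k = x ^ 2 * x ^ (k - 2) := by
      rw [← pow_add]; congr 1; omega
    rw [this]; ring
  have hbin : ∑ k ∈ Finset.range (b + 1), x ^ k * (1 - x) ^ (b - k) * (b.choose k : ℝ)
      = 1 := by
    rw [← add_pow]; simp
  have hsplit : ∑ k ∈ Finset.range (b + 1), x ^ k * (1 - x) ^ (b - k) * (b.choose k : ℝ)
      = ((1 - x) ^ b + b * x * (1 - x) ^ (b - 1))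
        + ∑ k ∈ Finset.Icc 2 b, x ^ k * (1 - x) ^ (b - k) * (b.choose k : ℝ) := by
    have : Finset.range (b + 1) = Finset.Ico 0 (b + 1) := by
      rw [Finset.range_eq_Ico]
    rw [this, ← Finset.sum_Ico_consecutive _ (by omega : 0 ≤ 2) (by omega : 2 ≤ b + 1)]
    have h2 : Finset.Ico 2 (b + 1) = Finset.Icc 2 b := rfl
    rw [h2]
    congr 1
    have : Finset.Ico 0 2 = {0, 1} := by decide
    rw [this]
    simp [Finset.sum_insert, Nat.choose_one_right]
    ring
  rw [h1]
  have := hbin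
  rw [hsplit] at this
  linarith
theorem lamB_succ_sub (μ : Measure ℝ) [IsFiniteMeasure μ]
    (h0 : μ {0} = 0) (h1 : μ {1} = 0)
    (hsupp : μ ((Set.Icc (0:ℝ) 1)ᶜ) = 0) (hpos : 0 < μ (Set.Icc (0:ℝ) 1))
    (b : ℕ) (hb : 2 ≤ b) :
    lamB μ (b + 1) - lamB μ b
      = ∫ x in Set.Icc (0:ℝ) 1, b * (1 - x) ^ (b - 1) ∂μ := by
  have hint : ∀ n : ℕ, IntegrableOn
      (fun x : ℝ => ∑ k ∈ Finset.Icc 2 n, (n.choose k : ℝ) * (x ^ (k - 2) * (1 - x) ^ (n - k)))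
      (Set.Icc (0:ℝ) 1) μ := by
    intro n
    exact integrable_finset_sum _ fun k _ => ((aux_integrable μ (k-2) (n-k)).const_mul _)
  have hlam : ∀ n : ℕ, lamB μ n
      = ∫ x in Set.Icc (0:ℝ) 1,
          ∑ k ∈ Finset.Icc 2 n, (n.choose k : ℝ) * (x ^ (k - 2) * (1 - x) ^ (n - k)) ∂μ := by
    intro n
    rw [integral_finset_sum _ fun k _ => ((aux_integrable μ (k-2) (n-k)).const_mul _)]
    unfold lamB lamBK
    refine Finset.sum_congr rfl fun k _ => ?_
    rw [integral_const_mul]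
  rw [hlam, hlam, ← integral_sub (hint (b+1)) (hint b)]
  refine integral_congr_ae ?_
  have hne : ∀ᵐ x ∂(μ.restrict (Set.Icc (0:ℝ) 1)), x ≠ 0 := by
    rw [ae_iff]
    have : {x : ℝ | ¬ x ≠ 0} = {0} := by ext x; simp
    rw [this, Measure.restrict_apply (measurableSet_singleton 0)]
    exact le_antisymm (le_trans (measure_mono Set.inter_subset_left) h0.le) bot_le
  filter_upwards [hne] with x hx
  have hx2 : x ^ 2 ≠ 0 := pow_ne_zero 2 hx
  refine mul_left_cancel₀ hx2 ?_
  rw [mul_sub, aux_key (b+1) (by omega), aux_key b (by omega)]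
  obtain ⟨c, rfl⟩ : ∃ c, b = c + 2 := ⟨b - 2, by omega⟩
  have e1 : c + 2 + 1 - 1 = c + 2 := by omega
  have e2 : c + 2 - 1 = c + 1 := by omega
  rw [e1, e2]
  push_cast
  ring
end

section
/- For every integer b ≥ 2, λ_b ≤ λ_{b+1} ≤ 3 λ_b. -/
open MeasureTheory Finset Filter

/-!
Writing `λ_b = ∫ p_b dΛ` with `p_b(x) = Σ_{k=2}^b C(b,k) x^{k-2} (1-x)^{b-k}`, Pascal's rule gives
the pointwise recursion `p_{b+1}(x) = p_b(x) + b (1-x)^{b-1}`, hence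
`λ_{b+1} = λ_b + b ∫ (1-x)^{b-1} dΛ`. The increment is nonnegative, and since `(1-x)^{b-1} ≤ (1-x)^{b-2}`
on `[0,1]` it is at most `b (b-1) λ_{b,2} = 2 C(b,2) λ_{b,2} ≤ 2 λ_b`.
-/

/-- `p_b(x)`, reindexed by `j = k - 2`. -/
noncomputable def lamBIntegrand (b : ℕ) (x : ℝ) : ℝ :=
  ∑ j ∈ range (b - 1), (b.choose (j + 2) : ℝ) * (x ^ j * (1 - x) ^ (b - (j + 2)))

@[fun_prop]
lemma continuous_lamBIntegrand (b : ℕ) : Continuous (lamBIntegrand b) := by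
  unfold lamBIntegrand
  fun_prop

lemma lamBIntegrand_succ (n : ℕ) (x : ℝ) :
    lamBIntegrand (n + 2) x = lamBIntegrand (n + 1) x + (n + 1) * (1 - x) ^ n := by
  have pascal (j : ℕ) :
      ((n + 2).choose (j + 2) : ℝ) = (n + 1).choose (j + 1) + (n + 1).choose (j + 2) :=
    mod_cast Nat.choose_succ_succ' (n + 1) (j + 1)
  have hsplit (j : ℕ) (hj : j ∈ range n) : x ^ j * (1 - x) ^ (n - (j + 1)) =
      x ^ (j + 1) * (1 - x) ^ (n - (j + 1)) + x ^ j * (1 - x) ^ (n - j) := by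
    rw [(by grind : n - j = n - (j + 1) + 1)]
    ring
  simp only [lamBIntegrand, show n + 2 - 1 = n + 1 from rfl, Nat.add_sub_cancel,
    Nat.add_sub_add_right, pascal, add_mul, sum_add_distrib]
  rw [sum_range_succ', sum_range_succ (n := n), Nat.choose_eq_zero_of_lt (by omega : n + 1 < n + 2),
    sum_congr rfl fun j hj => congrArg (_ * ·) (hsplit j hj)]
  simp only [mul_add, sum_add_distrib, zero_add, Nat.choose_one_right, Nat.cast_add, Nat.cast_one,
    pow_zero, tsub_zero, one_mul, CharP.cast_eq_zero, tsub_self, mul_one, zero_mul, add_zero]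
  ring

section

variable (μ : Measure ℝ)

lemma setIntegral_one_sub_pow_nonneg (n : ℕ) :
    0 ≤ ∫ x in Set.Icc 0 1, (1 - x) ^ n ∂μ :=
  setIntegral_nonneg measurableSet_Icc fun _ hx => pow_nonneg (sub_nonneg.2 hx.2) n

lemma lamBK_nonneg (b k : ℕ) : 0 ≤ lamBK μ b k :=
  setIntegral_nonneg measurableSet_Icc fun _ hx =>
    mul_nonneg (pow_nonneg hx.1 _) (pow_nonneg (sub_nonneg.2 hx.2) _)

lemma choose_mul_lamBK_le_lamB {b k : ℕ} (hk : k ∈ Icc 2 b) :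
    b.choose k * lamBK μ b k ≤ lamB μ b :=
  single_le_sum (fun i _ => mul_nonneg (Nat.cast_nonneg _) (lamBK_nonneg μ b i)) hk

variable [IsFiniteMeasure μ]

lemma lamB_eq_integral (b : ℕ) : lamB μ b = ∫ x in Set.Icc 0 1, lamBIntegrand b x ∂μ := by
  unfold lamBIntegrand
  rw [integral_finsetSum _ fun j _ => (by fun_prop : Continuous _).integrableOn_Icc,
    lamB, ← Ico_add_one_right_eq_Icc, sum_Ico_eq_sum_range, show b + 1 - 2 = b - 1 by omega]
  refine sum_congr rfl fun j _ => ?_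
  rw [integral_const_mul, lamBK, add_comm 2 j, Nat.add_sub_cancel]

lemma lamB_succ {b : ℕ} (hb : 1 ≤ b) :
    lamB μ (b + 1) = lamB μ b + b * ∫ x in Set.Icc 0 1, (1 - x) ^ (b - 1) ∂μ := by
  obtain ⟨n, rfl⟩ : ∃ n, b = n + 1 := ⟨b - 1, by omega⟩
  rw [lamB_eq_integral, lamB_eq_integral, ← integral_const_mul,
    ← integral_add (by fun_prop : Continuous _).integrableOn_Icc
      (by fun_prop : Continuous _).integrableOn_Icc]
  simp only [lamBIntegrand_succ, Nat.add_sub_cancel, Nat.cast_add, Nat.cast_one]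

lemma setIntegral_one_sub_pow_succ_le (n : ℕ) :
    ∫ x in Set.Icc 0 1, (1 - x) ^ (n + 1) ∂μ ≤ ∫ x in Set.Icc 0 1, (1 - x) ^ n ∂μ :=
  setIntegral_mono_on (by fun_prop : Continuous _).integrableOn_Icc
    (by fun_prop : Continuous _).integrableOn_Icc measurableSet_Icc fun x hx =>
      pow_le_pow_of_le_one (by linarith [hx.2]) (by linarith [hx.1]) n.le_succ

lemma mul_setIntegral_one_sub_pow_le_two_mul_lamB {b : ℕ} (hb : 2 ≤ b) :
    b * ∫ x in Set.Icc 0 1, (1 - x) ^ (b - 1) ∂μ ≤ 2 * lamB μ b := by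
  obtain ⟨n, rfl⟩ : ∃ n, b = n + 2 := ⟨b - 2, by omega⟩
  have hJ : lamBK μ (n + 2) 2 = ∫ x in Set.Icc 0 1, (1 - x) ^ n ∂μ := by simp [lamBK]
  have h2 := choose_mul_lamBK_le_lamB μ (left_mem_Icc.2 hb)
  rw [Nat.cast_choose_two, hJ] at h2
  push_cast
  calc ((n : ℝ) + 2) * ∫ x in Set.Icc 0 1, (1 - x) ^ (n + 1) ∂μ
      ≤ (n + 2) * ∫ x in Set.Icc 0 1, (1 - x) ^ n ∂μ := by
        gcongr ?_ * ?_
        exact setIntegral_one_sub_pow_succ_le μ n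
    _ ≤ (n + 2) * (n + 1) * ∫ x in Set.Icc 0 1, (1 - x) ^ n ∂μ := by
        rw [mul_right_comm]
        exact le_mul_of_one_le_right
          (mul_nonneg (by positivity) (setIntegral_one_sub_pow_nonneg μ n)) (by simp)
    _ ≤ 2 * lamB μ (n + 2) := by push_cast at h2; linarith

end

theorem lamB_mono_and_le_three_mul_general (μ : Measure ℝ) [IsFiniteMeasure μ]
    (b : ℕ) (hb : 2 ≤ b) :
    lamB μ b ≤ lamB μ (b + 1) ∧ lamB μ (b + 1) ≤ 3 * lamB μ b := by
  have hstep := lamB_succ μ (by omega : 1 ≤ b)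
  have hinc := mul_nonneg b.cast_nonneg (setIntegral_one_sub_pow_nonneg μ (b - 1))
  have hbound := mul_setIntegral_one_sub_pow_le_two_mul_lamB μ hb
  constructor <;> linarith

theorem lamB_mono_and_le_three_mul (μ : Measure ℝ) [IsFiniteMeasure μ]
    (h0 : μ {0} = 0) (h1 : μ {1} = 0)
    (hsupp : μ ((Set.Icc (0:ℝ) 1)ᶜ) = 0) (hpos : 0 < μ (Set.Icc (0:ℝ) 1))
    (b : ℕ) (hb : 2 ≤ b) :
    lamB μ b ≤ lamB μ (b + 1) ∧ lamB μ (b + 1) ≤ 3 * lamB μ b :=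
  lamB_mono_and_le_three_mul_general μ b hb
end

section
/- For every integer b ≥ 2, γ_{b+1} - γ_b = ∫_{(0,1]} x^{-1} (1 - (1-x)^b) dΛ(x) ≥ 0; in particular the sequence (γ_b)_{b≥2} is nondecreasing. -/
open MeasureTheory Finset Filter

lemma sumOne (b : ℕ) (x : ℝ) :
    ∑ k ∈ Finset.range (b+1), (b.choose k : ℝ) * ((k:ℝ)-1) * (x^k * (1-x)^(b-k)) = b*x - 1 := by
  have hU : ∑ k ∈ Finset.range (b+1), (b.choose k : ℝ) * (x^k * (1-x)^(b-k)) = 1 := by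
    have h := add_pow x (1-x) b
    simp only [add_sub_cancel, one_pow] at h
    exact (Finset.sum_congr rfl fun k _ => by ring).trans h.symm
  have hT : ∑ k ∈ Finset.range (b+1), (k:ℝ) * ((b.choose k : ℝ) * (x^k * (1-x)^(b-k))) = b*x := by
    have h := bernsteinPolynomial.sum_smul ℝ b
    have h2 := congrArg (Polynomial.eval x) h
    simp [bernsteinPolynomial, Polynomial.eval_finset_sum] at h2
    rw [← h2]
    exact Finset.sum_congr rfl fun k _ => by ring
  calc ∑ k ∈ Finset.range (b+1), (b.choose k : ℝ) * ((k:ℝ)-1) * (x^k * (1-x)^(b-k))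
      = ∑ k ∈ Finset.range (b+1), ((k:ℝ) * ((b.choose k : ℝ) * (x^k * (1-x)^(b-k)))
          - (b.choose k : ℝ) * (x^k * (1-x)^(b-k))) :=
        Finset.sum_congr rfl fun k _ => by ring
    _ = b*x - 1 := by rw [Finset.sum_sub_distrib, hU, hT]

lemma keyA (b : ℕ) (hb : 1 ≤ b) (x : ℝ) :
    x^2 * ∑ k ∈ Finset.Icc 2 b, (b.choose k : ℝ) * ((k:ℝ)-1) * (x^(k-2) * (1-x)^(b-k))
      = b*x - 1 + (1-x)^b := by
  rw [Finset.mul_sum]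
  have hcg : ∑ k ∈ Finset.Icc 2 b, x^2 * ((b.choose k : ℝ) * ((k:ℝ)-1) * (x^(k-2) * (1-x)^(b-k)))
      = ∑ k ∈ Finset.Icc 2 b, (b.choose k : ℝ) * ((k:ℝ)-1) * (x^k * (1-x)^(b-k)) := by
    refine Finset.sum_congr rfl fun k hk => ?_
    have h2k : 2 ≤ k := (Finset.mem_Icc.mp hk).1
    have hx : x^2 * x^(k-2) = x^k := by
      rw [← pow_add]; congr 1; omega
    calc x^2 * ((b.choose k : ℝ) * ((k:ℝ)-1) * (x^(k-2) * (1-x)^(b-k)))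
        = (b.choose k : ℝ) * ((k:ℝ)-1) * ((x^2 * x^(k-2)) * (1-x)^(b-k)) := by ring
      _ = _ := by rw [hx]
  rw [hcg]
  have hsplit := Finset.sum_Ico_consecutive
    (f := fun k => (b.choose k : ℝ) * ((k:ℝ)-1) * (x^k * (1-x)^(b-k)))
    (by omega : 0 ≤ 2) (by omega : 2 ≤ b+1)
  have hIcc : Finset.Icc 2 b = Finset.Ico 2 (b+1) := by rw [Finset.Ico_add_one_right_eq_Icc]
  have hrange : Finset.Ico 0 (b+1) = Finset.range (b+1) := by
    rw [Finset.range_eq_Ico]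
  have hlow : ∑ k ∈ Finset.Ico 0 2, (b.choose k : ℝ) * ((k:ℝ)-1) * (x^k * (1-x)^(b-k))
      = -(1-x)^b := by
    rw [show Finset.Ico 0 2 = {0, 1} from rfl]
    simp
  rw [hIcc]
  have := sumOne b x
  rw [hrange, this] at hsplit
  rw [hlow] at hsplit
  linarith [hsplit]

theorem gamB_succ_sub (μ : Measure ℝ) [IsFiniteMeasure μ]
    (h0 : μ {0} = 0) (h1 : μ {1} = 0)
    (hsupp : μ ((Set.Icc (0:ℝ) 1)ᶜ) = 0) (hpos : 0 < μ (Set.Icc (0:ℝ) 1))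
    (b : ℕ) (hb : 2 ≤ b) :
    gamB μ (b + 1) - gamB μ b
        = ∫ x in Set.Ioc (0:ℝ) 1, (1 - (1 - x) ^ b) / x ∂μ ∧
      gamB μ b ≤ gamB μ (b + 1) := by
  have hint : ∀ (c k : ℕ), IntegrableOn
      (fun x : ℝ => (c.choose k : ℝ) * ((k:ℝ)-1) * (x^(k-2) * (1-x)^(c-k)))
      (Set.Icc 0 1) μ := by
    intro c k
    apply Continuous.integrableOn_Icc
    fun_prop
  have hintS : ∀ c : ℕ, IntegrableOn
      (fun x : ℝ => ∑ k ∈ Finset.Icc 2 c, (c.choose k : ℝ) * ((k:ℝ)-1) * (x^(k-2) * (1-x)^(c-k)))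
      (Set.Icc 0 1) μ :=
    fun c => integrable_finset_sum _ (fun k _ => hint c k)
  have hgam : ∀ c : ℕ, gamB μ c = ∫ x in Set.Icc (0:ℝ) 1,
      ∑ k ∈ Finset.Icc 2 c, (c.choose k : ℝ) * ((k:ℝ)-1) * (x^(k-2) * (1-x)^(c-k)) ∂μ := by
    intro c
    rw [integral_finset_sum _ (fun k _ => hint c k)]
    unfold gamB lamBK
    refine Finset.sum_congr rfl fun k hk => ?_
    rw [MeasureTheory.integral_const_mul]
  have hdiff : gamB μ (b+1) - gamB μ b = ∫ x in Set.Icc (0:ℝ) 1,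
      ((∑ k ∈ Finset.Icc 2 (b+1), ((b+1).choose k : ℝ) * ((k:ℝ)-1) * (x^(k-2) * (1-x)^(b+1-k)))
       - ∑ k ∈ Finset.Icc 2 b, (b.choose k : ℝ) * ((k:ℝ)-1) * (x^(k-2) * (1-x)^(b-k))) ∂μ := by
    rw [hgam, hgam, ← integral_sub (hintS (b+1)) (hintS b)]
  have hIoc : gamB μ (b+1) - gamB μ b = ∫ x in Set.Ioc (0:ℝ) 1,
      ((∑ k ∈ Finset.Icc 2 (b+1), ((b+1).choose k : ℝ) * ((k:ℝ)-1) * (x^(k-2) * (1-x)^(b+1-k)))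
       - ∑ k ∈ Finset.Icc 2 b, (b.choose k : ℝ) * ((k:ℝ)-1) * (x^(k-2) * (1-x)^(b-k))) ∂μ := by
    rw [hdiff, integral_Icc_eq_integral_Ioc' h0]
  have hmain : gamB μ (b+1) - gamB μ b
      = ∫ x in Set.Ioc (0:ℝ) 1, (1 - (1 - x) ^ b) / x ∂μ := by
    rw [hIoc]
    refine setIntegral_congr_fun measurableSet_Ioc fun x hx => ?_
    have hxne : x ≠ 0 := ne_of_gt hx.1
    rw [eq_div_iff hxne]
    refine mul_right_cancel₀ hxne ?_
    have e1 := keyA b (by omega) x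
    have e2 := keyA (b+1) (by omega) x
    push_cast at e2
    linear_combination e2 - e1
  refine ⟨hmain, ?_⟩
  have hnn : 0 ≤ ∫ x in Set.Ioc (0:ℝ) 1, (1 - (1 - x) ^ b) / x ∂μ := by
    refine setIntegral_nonneg measurableSet_Ioc fun x hx => ?_
    refine div_nonneg (sub_nonneg.2 ?_) hx.1.le
    exact pow_le_one₀ (by linarith [hx.2]) (by linarith [hx.1])
  linarith [hmain ▸ hnn]
end

section
/- The increments b ↦ γ_{b+1} - γ_b are nondecreasing in b for b ≥ 2, and consequently γ_b ≥ (γ_3 - γ_2)(b - 2) for every integer b ≥ 2. -/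
open MeasureTheory Finset Filter

/-!
Write `γ_b = ∫_{[0,1]} F_b dΛ` with `F_b = gamIntegrand b`. The mass and mean of the
binomial distribution give `x² F_b(x) = b x - 1 + (1 - x)^b`, hence
`F_{b+1} - F_b = ∑_{j<b} (1 - x)^j`, first off `x = 0` and then everywhere by continuity.
This sum grows with `b` on `[0,1]`, so `γ` is discretely convex, and the lower bound
is the chord bound from `b = 2` together with `γ_2 = Λ([0,1]) ≥ 0`.
-/

theorem sum_range_sub_one_mul_choose_mul_pow (n : ℕ) (x : ℝ) :
    ∑ k ∈ range (n + 1), ((k : ℝ) - 1) * (n.choose k * x ^ k * (1 - x) ^ (n - k)) =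
      n * x - 1 := by
  have hmean := congrArg (Polynomial.eval x) (bernsteinPolynomial.sum_smul ℝ n)
  have htotal := congrArg (Polynomial.eval x) (bernsteinPolynomial.sum ℝ n)
  simp only [Polynomial.eval_finsetSum, bernsteinPolynomial, Polynomial.eval_mul,
    Polynomial.eval_pow, Polynomial.eval_sub, Polynomial.eval_natCast, Polynomial.eval_X,
    Polynomial.eval_one, nsmul_eq_mul] at hmean htotal
  simp only [sub_mul, one_mul, Finset.sum_sub_distrib, hmean, htotal]

noncomputable def gamIntegrand (b : ℕ) (x : ℝ) : ℝ :=
  ∑ k ∈ Icc 2 b, (b.choose k : ℝ) * ((k : ℝ) - 1) * (x ^ (k - 2) * (1 - x) ^ (b - k))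

theorem sq_mul_gamIntegrand (b : ℕ) (x : ℝ) :
    x ^ 2 * gamIntegrand b x = b * x - 1 + (1 - x) ^ b := by
  obtain _ | _ | m := b
  · simp [gamIntegrand]
  · simp [gamIntegrand]
  -- the `k = 0` term of the full sum is `-(1 - x)^b`, the `k = 1` term vanishes
  have hsplit := sum_range_sub_one_mul_choose_mul_pow (m + 2) x
  rw [Finset.range_eq_Ico, ← Finset.sum_Ico_consecutive _ (Nat.zero_le 2) (by omega),
    ← Finset.range_eq_Ico, Finset.sum_range_succ, Finset.sum_range_one,
    Finset.Ico_add_one_right_eq_Icc] at hsplit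
  have hterm : ∀ k ∈ Icc 2 (m + 2),
      ((k : ℝ) - 1) * ((m + 2).choose k * x ^ k * (1 - x) ^ (m + 2 - k)) =
        x ^ 2 * ((m + 2).choose k * ((k : ℝ) - 1) * (x ^ (k - 2) * (1 - x) ^ (m + 2 - k))) := by
    intro k hk
    obtain ⟨j, rfl⟩ := Nat.exists_eq_add_of_le (Finset.mem_Icc.mp hk).1
    rw [Nat.add_sub_cancel_left, pow_add]
    ring
  rw [Finset.sum_congr rfl hterm, ← Finset.mul_sum] at hsplit
  rw [gamIntegrand]
  norm_num at hsplit ⊢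
  linear_combination hsplit

theorem continuous_gamIntegrand (b : ℕ) : Continuous (gamIntegrand b) :=
  continuous_finsetSum _ fun _ _ => by fun_prop

theorem gamIntegrand_succ_sub (b : ℕ) :
    gamIntegrand (b + 1) - gamIntegrand b = fun x => ∑ j ∈ range b, (1 - x) ^ j := by
  refine Continuous.ext_on (dense_compl_singleton 0)
    ((continuous_gamIntegrand _).sub (continuous_gamIntegrand _))
    (continuous_finsetSum _ fun _ _ => by fun_prop) fun x (hx : x ≠ 0) => ?_
  have hgeom := mul_neg_geom_sum (1 - x) b
  refine mul_left_cancel₀ (pow_ne_zero 2 hx) ?_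
  rw [Pi.sub_apply, mul_sub, sq_mul_gamIntegrand, sq_mul_gamIntegrand]
  push_cast
  linear_combination -x * hgeom

section

variable {μ : Measure ℝ}

theorem gamB_two_nonneg : 0 ≤ gamB μ 2 := by
  simp [gamB, lamBK]

variable [IsFiniteMeasureOnCompacts μ]

theorem gamB_eq_integral (b : ℕ) : gamB μ b = ∫ x in Set.Icc 0 1, gamIntegrand b x ∂μ := by
  simp only [gamB, lamBK, gamIntegrand]
  rw [integral_finsetSum _ fun _ _ => Continuous.integrableOn_Icc (by fun_prop)]
  exact Finset.sum_congr rfl fun _ _ => (integral_const_mul _ _).symm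

theorem gamB_succ_sub_s6 (b : ℕ) :
    gamB μ (b + 1) - gamB μ b = ∫ x in Set.Icc 0 1, ∑ j ∈ range b, (1 - x) ^ j ∂μ := by
  rw [gamB_eq_integral, gamB_eq_integral, ← integral_sub
    (continuous_gamIntegrand _).integrableOn_Icc (continuous_gamIntegrand _).integrableOn_Icc]
  exact congrArg _ (gamIntegrand_succ_sub b)

theorem monotone_gamB_succ_sub : Monotone fun b => gamB μ (b + 1) - gamB μ b := by
  refine monotone_nat_of_le_succ fun b => ?_
  simp only [gamB_succ_sub_s6]
  refine setIntegral_mono_on (Continuous.integrableOn_Icc (by fun_prop))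
    (Continuous.integrableOn_Icc (by fun_prop)) measurableSet_Icc fun x hx => ?_
  rw [Finset.sum_range_succ _ b]
  exact le_add_of_nonneg_right (pow_nonneg (sub_nonneg.mpr hx.2) b)

end

theorem add_nsmul_sub_le_of_monotone_sub {α : Type*} [AddCommGroup α] [PartialOrder α]
    [IsOrderedAddMonoid α] {f : ℕ → α} (hf : Monotone fun n => f (n + 1) - f n) (n : ℕ) :
    f 0 + n • (f 1 - f 0) ≤ f n := by
  induction n with
  | zero => simp
  | succ n ih =>
    have hstep : f 1 - f 0 ≤ f (n + 1) - f n := hf (Nat.zero_le n)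
    calc f 0 + (n + 1) • (f 1 - f 0) = f 0 + n • (f 1 - f 0) + (f 1 - f 0) := by
          rw [succ_nsmul, add_assoc]
      _ ≤ f n + (f (n + 1) - f n) := add_le_add ih hstep
      _ = f (n + 1) := add_sub_cancel _ _

theorem gamB_increments_mono_and_lower_bound_general (μ : Measure ℝ) [IsFiniteMeasure μ] :
    (∀ b : ℕ, 2 ≤ b →
        gamB μ (b + 1) - gamB μ b ≤ gamB μ (b + 2) - gamB μ (b + 1)) ∧
      (∀ b : ℕ, 2 ≤ b → (gamB μ 3 - gamB μ 2) * ((b : ℝ) - 2) ≤ gamB μ b) := by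
  refine ⟨fun b _ => monotone_gamB_succ_sub (Nat.le_succ b), fun b hb => ?_⟩
  obtain ⟨n, rfl⟩ := Nat.exists_eq_add_of_le' hb
  have hchord := add_nsmul_sub_le_of_monotone_sub (f := fun n => gamB μ (n + 2))
    (monotone_gamB_succ_sub.comp fun _ _ h => Nat.add_le_add_right h 2) n
  have hγ₂ : 0 ≤ gamB μ 2 := gamB_two_nonneg
  rw [nsmul_eq_mul] at hchord
  push_cast
  linarith

theorem gamB_increments_mono_and_lower_bound (μ : Measure ℝ) [IsFiniteMeasure μ]
    (h0 : μ {0} = 0) (h1 : μ {1} = 0)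
    (hsupp : μ ((Set.Icc (0:ℝ) 1)ᶜ) = 0) (hpos : 0 < μ (Set.Icc (0:ℝ) 1)) :
    (∀ b : ℕ, 2 ≤ b →
        gamB μ (b + 1) - gamB μ b ≤ gamB μ (b + 2) - gamB μ (b + 1)) ∧
      (∀ b : ℕ, 2 ≤ b → (gamB μ 3 - gamB μ 2) * ((b : ℝ) - 2) ≤ gamB μ b) :=
  gamB_increments_mono_and_lower_bound_general μ
end

section
/- There exist a ∈ (0,1), a constant C₂ ∈ (0,∞) (depending on Λ and a), and an integer b₀ such that for all b ≥ b₀: γ_b^a ≤ γ_b ≤ C₂ γ_b^a. -/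
open MeasureTheory Finset Filter

/-!
Write `γ_b = ∫_{[0,1]} G_b dΛ` with `G_b = gamKernel b`. The first two
moments of the binomial distribution give `x² G_b(x) = b x - 1 + (1-x)^b`, that is
`G_b(x) = Σ_{i<b} Σ_{j<i} (1-x)^j`, so `b - 1 ≤ G_b(x) ≤ b / x` on `(0,1]`.
Since `Λ` has no atom at `1`, some `a < 1` has `Λ([0,a]) > 0`. Then `γ_b^a ≥ (b-1) Λ([0,a])`, while
`γ_b - γ_b^a = ∫_{(a,1]} G_b dΛ ≤ (b/a) Λ((a,1])`, and both sides grow linearly in `b`.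
-/

noncomputable def gamKernel (b : ℕ) (x : ℝ) : ℝ :=
  ∑ k ∈ Icc 2 b, (b.choose k : ℝ) * ((k : ℝ) - 1) * (x ^ (k - 2) * (1 - x) ^ (b - k))

lemma continuous_gamKernel (b : ℕ) : Continuous (gamKernel b) := by
  unfold gamKernel; fun_prop

lemma sum_range_bernstein_mul_pred (b : ℕ) (x : ℝ) :
    ∑ k ∈ range (b + 1), (b.choose k : ℝ) * ((k : ℝ) - 1) * (x ^ k * (1 - x) ^ (b - k))
      = b * x - 1 := by
  have h₀ := congrArg (Polynomial.eval x) (bernsteinPolynomial.sum ℝ b)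
  have h₁ := congrArg (Polynomial.eval x) (bernsteinPolynomial.sum_smul ℝ b)
  simp only [Polynomial.eval_finsetSum, bernsteinPolynomial, Polynomial.eval_mul,
    Polynomial.eval_pow, Polynomial.eval_sub, Polynomial.eval_X, Polynomial.eval_one,
    Polynomial.eval_natCast, nsmul_eq_mul] at h₀ h₁
  calc _ = ∑ k ∈ range (b + 1), ((k : ℝ) * ((b.choose k : ℝ) * x ^ k * (1 - x) ^ (b - k))
          - (b.choose k : ℝ) * x ^ k * (1 - x) ^ (b - k)) := sum_congr rfl fun k _ => by ring
    _ = b * x - 1 := by rw [sum_sub_distrib, h₀, h₁]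

lemma sq_mul_gamKernel (b : ℕ) (x : ℝ) :
    x ^ 2 * gamKernel b x = b * x - 1 + (1 - x) ^ b := by
  rcases b with _ | n
  · simp [gamKernel]
  set f : ℕ → ℝ := fun k =>
    ((n + 1).choose k : ℝ) * ((k : ℝ) - 1) * (x ^ k * (1 - x) ^ (n + 1 - k))
  have hsplit := sum_range_add_sum_Ico f (show 2 ≤ n + 1 + 1 by omega)
  rw [sum_range_bernstein_mul_pred, Ico_add_one_right_eq_Icc, sum_range_succ,
    sum_range_one] at hsplit
  have hf₀ : f 0 = -(1 - x) ^ (n + 1) := by simp [f]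
  have hf₁ : f 1 = 0 := by simp [f]
  have hterm : ∀ k ∈ Icc 2 (n + 1),
      x ^ 2 * (((n + 1).choose k : ℝ) * ((k : ℝ) - 1) * (x ^ (k - 2) * (1 - x) ^ (n + 1 - k)))
        = f k := by
    intro k hk
    simp only [f, ← pow_sub_mul_pow x (mem_Icc.1 hk).1]
    ring
  rw [gamKernel, mul_sum, sum_congr rfl hterm]
  push_cast at hsplit ⊢
  linarith

lemma mul_sum_range_geom (i : ℕ) (x : ℝ) :
    x * ∑ j ∈ range i, (1 - x) ^ j = 1 - (1 - x) ^ i := by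
  simpa using mul_neg_geom_sum (1 - x) i

lemma gamKernel_eq_sum_geom (b : ℕ) (x : ℝ) :
    gamKernel b x = ∑ i ∈ range b, ∑ j ∈ range i, (1 - x) ^ j := by
  refine congrFun ((continuous_gamKernel b).ext_on (dense_compl_singleton 0)
    (g := fun x => ∑ i ∈ range b, ∑ j ∈ range i, (1 - x) ^ j) (by fun_prop)
    fun x hx => mul_left_cancel₀ (pow_ne_zero 2 hx) ?_) x
  calc x ^ 2 * gamKernel b x = b * x - 1 + (1 - x) ^ b := sq_mul_gamKernel b x
    _ = x * ∑ i ∈ range b, x * ∑ j ∈ range i, (1 - x) ^ j := by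
      simp only [mul_sum_range_geom, sum_sub_distrib, sum_const, card_range, nsmul_eq_mul,
        mul_one, mul_sub]
      ring
    _ = x ^ 2 * ∑ i ∈ range b, ∑ j ∈ range i, (1 - x) ^ j := by rw [← mul_sum]; ring

lemma gamKernel_nonneg (b : ℕ) {x : ℝ} (hx : x ≤ 1) : 0 ≤ gamKernel b x := by
  rw [gamKernel_eq_sum_geom]
  exact sum_nonneg fun i _ => sum_nonneg fun j _ => pow_nonneg (by linarith) j

lemma pred_le_gamKernel (b : ℕ) {x : ℝ} (hx : x ≤ 1) : (b : ℝ) - 1 ≤ gamKernel b x := by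
  rcases b with _ | n
  · simp [gamKernel]
  rw [gamKernel_eq_sum_geom, sum_range_succ', sum_range_zero, add_zero, Nat.cast_add_one,
    add_sub_cancel_right]
  simpa using sum_le_sum fun i (_ : i ∈ range n) =>
    single_le_sum (fun j _ => pow_nonneg (by linarith : 0 ≤ 1 - x) j) (mem_range.2 i.succ_pos)

lemma mul_gamKernel_le (b : ℕ) {x : ℝ} (hx : x ≤ 1) : x * gamKernel b x ≤ b := by
  rw [gamKernel_eq_sum_geom, mul_sum]
  simp only [mul_sum_range_geom]
  simpa using sum_le_sum fun i (_ : i ∈ range b) =>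
    (sub_le_self 1 (pow_nonneg (by linarith : 0 ≤ 1 - x) i))

lemma setIntegral_Ioc_gamKernel_nonneg (μ : Measure ℝ) (a : ℝ) (b : ℕ) :
    0 ≤ ∫ x in Set.Ioc a 1, gamKernel b x ∂μ :=
  setIntegral_nonneg measurableSet_Ioc fun _ hx => gamKernel_nonneg b hx.2

section
variable (μ : Measure ℝ) [IsLocallyFiniteMeasure μ]

lemma gamB_eq_setIntegral_gamKernel (b : ℕ) :
    gamB μ b = ∫ x in Set.Icc 0 1, gamKernel b x ∂μ := by
  simp only [gamKernel]
  rw [integral_finsetSum _ fun k _ => Continuous.integrableOn_Icc (by fun_prop)]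
  simp only [integral_const_mul, gamB, lamBK]

lemma gamB_restrict_Icc {a : ℝ} (ha : a ≤ 1) (b : ℕ) :
    gamB (μ.restrict (Set.Icc 0 a)) b = ∫ x in Set.Icc 0 a, gamKernel b x ∂μ := by
  rw [gamB_eq_setIntegral_gamKernel, Measure.restrict_restrict measurableSet_Icc,
    Set.Icc_inter_Icc, max_self, min_eq_right ha]

lemma gamB_eq_gamB_restrict_add {a : ℝ} (ha₀ : 0 ≤ a) (ha₁ : a ≤ 1) (b : ℕ) :
    gamB μ b = gamB (μ.restrict (Set.Icc 0 a)) b + ∫ x in Set.Ioc a 1, gamKernel b x ∂μ := by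
  have hint : IntegrableOn (gamKernel b) (Set.Icc 0 1) μ :=
    (continuous_gamKernel b).integrableOn_Icc
  rw [gamB_restrict_Icc μ ha₁, gamB_eq_setIntegral_gamKernel,
    ← Set.Icc_union_Ioc_eq_Icc ha₀ ha₁]
  exact setIntegral_union (Set.disjoint_left.2 fun _ hx hx' => hx'.1.not_ge hx.2)
    measurableSet_Ioc (hint.mono_set (Set.Icc_subset_Icc le_rfl ha₁))
    (hint.mono_set fun _ hx => ⟨ha₀.trans hx.1.le, hx.2⟩)

lemma pred_mul_measureReal_le_gamB_restrict {a : ℝ} (ha : a ≤ 1) (b : ℕ) :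
    ((b : ℝ) - 1) * μ.real (Set.Icc 0 a) ≤ gamB (μ.restrict (Set.Icc 0 a)) b := by
  rw [gamB_restrict_Icc μ ha, mul_comm, ← smul_eq_mul, ← setIntegral_const]
  exact setIntegral_mono_on (integrableOn_const measure_Icc_lt_top.ne)
    (continuous_gamKernel b).integrableOn_Icc measurableSet_Icc
    fun x hx => pred_le_gamKernel b (hx.2.trans ha)

lemma setIntegral_Ioc_gamKernel_le {a : ℝ} (ha : 0 < a) (b : ℕ) :
    ∫ x in Set.Ioc a 1, gamKernel b x ∂μ ≤ b / a * μ.real (Set.Ioc a 1) := by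
  rw [mul_comm, ← smul_eq_mul, ← setIntegral_const]
  refine setIntegral_mono_on
    ((continuous_gamKernel b).integrableOn_Icc.mono_set Set.Ioc_subset_Icc_self)
    (integrableOn_const measure_Ioc_lt_top.ne) measurableSet_Ioc fun x hx => ?_
  have hx₀ : 0 < x := ha.trans hx.1
  calc gamKernel b x ≤ b / x := by rw [le_div_iff₀ hx₀, mul_comm]; exact mul_gamKernel_le b hx.2
    _ ≤ b / a := div_le_div_of_nonneg_left b.cast_nonneg ha hx.1.le

end

lemma exists_measure_Icc_pos (μ : Measure ℝ) (h₁ : μ {1} = 0) (hpos : 0 < μ (Set.Icc 0 1)) :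
    ∃ a ∈ Set.Ioo (0 : ℝ) 1, 0 < μ (Set.Icc 0 a) := by
  by_contra! hnull
  have hcover : Set.Icc (0 : ℝ) 1 ⊆ (⋃ n : ℕ, Set.Icc 0 (1 - 1 / (n + 2))) ∪ {1} := by
    intro x ⟨hx₀, hx₁⟩
    rcases hx₁.lt_or_eq with hx₁ | rfl
    · obtain ⟨n, hn⟩ := exists_nat_one_div_lt (sub_pos.2 hx₁)
      refine Or.inl (Set.mem_iUnion.2 ⟨n, hx₀, ?_⟩)
      have : 1 / ((n : ℝ) + 2) ≤ 1 / (n + 1) :=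
        one_div_le_one_div_of_le (by positivity) (by linarith)
      linarith
    · exact Or.inr rfl
  refine hpos.ne' (measure_mono_null hcover
    (measure_union_null (measure_iUnion_null fun n => ?_) h₁))
  refine nonpos_iff_eq_zero.1 (hnull _ ⟨?_, ?_⟩)
  · rw [sub_pos]; exact (div_lt_one (by positivity)).2 (by linarith)
  · have : (0 : ℝ) < 1 / (n + 2) := by positivity
    linarith

theorem gamB_restrict_comparable_general (μ : Measure ℝ) [IsFiniteMeasure μ]
    (h1 : μ {1} = 0) (hpos : 0 < μ (Set.Icc (0:ℝ) 1)) :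
    ∃ a : ℝ, a ∈ Set.Ioo (0:ℝ) 1 ∧ ∃ C₂ : ℝ, 0 < C₂ ∧ ∃ b₀ : ℕ, ∀ b : ℕ, b₀ ≤ b →
      gamB (μ.restrict (Set.Icc 0 a)) b ≤ gamB μ b ∧
        gamB μ b ≤ C₂ * gamB (μ.restrict (Set.Icc 0 a)) b := by
  obtain ⟨a, ⟨ha₀, ha₁⟩, hmass⟩ := exists_measure_Icc_pos μ h1 hpos
  have hm : 0 < μ.real (Set.Icc 0 a) := ENNReal.toReal_pos hmass.ne' (measure_ne_top _ _)
  set m := μ.real (Set.Icc 0 a)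
  set M := μ.real (Set.Ioc a 1)
  have hM : 0 ≤ M := measureReal_nonneg
  refine ⟨a, ⟨ha₀, ha₁⟩, 1 + 2 * M / (a * m), by positivity, 2, fun b hb => ?_⟩
  have hsplit := gamB_eq_gamB_restrict_add μ ha₀.le ha₁.le b
  have htail₀ := setIntegral_Ioc_gamKernel_nonneg μ a b
  have htail := setIntegral_Ioc_gamKernel_le μ ha₀ b
  have hlow := pred_mul_measureReal_le_gamB_restrict μ ha₁.le b
  have hb' : (b : ℝ) ≤ 2 * ((b : ℝ) - 1) := by
    have : (2 : ℝ) ≤ b := by exact_mod_cast hb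
    linarith
  refine ⟨by linarith, ?_⟩
  have htail' : ∫ x in Set.Ioc a 1, gamKernel b x ∂μ ≤ 2 * M / (a * m) * (((b : ℝ) - 1) * m) :=
    calc _ ≤ b / a * M := htail
      _ ≤ 2 * ((b : ℝ) - 1) / a * M := by gcongr
      _ = 2 * M / (a * m) * (((b : ℝ) - 1) * m) := by field_simp
  have hhead := mul_le_mul_of_nonneg_left hlow (by positivity : 0 ≤ 2 * M / (a * m))
  linarith

theorem gamB_restrict_comparable (μ : Measure ℝ) [IsFiniteMeasure μ]
    (h0 : μ {0} = 0) (h1 : μ {1} = 0)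
    (hsupp : μ ((Set.Icc (0:ℝ) 1)ᶜ) = 0) (hpos : 0 < μ (Set.Icc (0:ℝ) 1)) :
    ∃ a : ℝ, a ∈ Set.Ioo (0:ℝ) 1 ∧ ∃ C₂ : ℝ, 0 < C₂ ∧ ∃ b₀ : ℕ, ∀ b : ℕ, b₀ ≤ b →
      gamB (μ.restrict (Set.Icc 0 a)) b ≤ gamB μ b ∧
        gamB μ b ≤ C₂ * gamB (μ.restrict (Set.Icc 0 a)) b :=
  gamB_restrict_comparable_general μ h1 hpos
end

section
/- There exists a finite constant ρ ≥ 1, independent of Λ, such that for all integers υ ≥ 1 and nonnegative integers b_1, …, b_υ with Σ_{i=1}^υ b_i > υ: λ_{⌈Σ_{i=1}^υ b_i / υ⌉} ≤ Σ_{i=1}^υ λ_{b_i} ≤ υ^{1+ρ} λ_{⌈Σ_{i=1}^υ b_i / υ⌉}. -/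
open MeasureTheory Finset Filter

/-!
Write `λ_b = ∫_{[0,1]} g_b dΛ` with `g_b(x) = Σ_{j<b} j (1-x)^{j-1}`; both this sum and the
integrand of `λ_b` equal `x⁻² (1 - (1-x)^b - b x (1-x)^{b-1})`. Hence `b ↦ λ_b` is
nondecreasing, and `b ↦ λ_b / (b(b-1))` is nonincreasing because `2 g_b / (b(b-1))` is an
average of the decreasing sequence `(1-x)^{j-1}` with weights `j`, and enlarging `b` only
adds smaller terms.

Let `S = Σ b_i` and `m = ⌈S/υ⌉ ≥ 2`. Some `b_i ≥ m`, which gives the lower bound. Every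
`b_i ≤ S ≤ υ m`, so `Σ λ_{b_i} ≤ υ λ_S ≤ υ · S(S-1)/(m(m-1)) · λ_m ≤ υ⁴ λ_m`: `ρ = 3`.
-/

theorem sum_range_mul_sum_range_mul_le {w f : ℕ → ℝ} (hw : ∀ j, 0 ≤ w j) (hf : Antitone f)
    {m n : ℕ} (hmn : m ≤ n) :
    (∑ j ∈ range m, w j) * ∑ j ∈ range n, w j * f j
      ≤ (∑ j ∈ range n, w j) * ∑ j ∈ range m, w j * f j := by
  induction n, hmn using Nat.le_induction with
  | base => exact le_rfl
  | succ n hmn ih =>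
    have hfn : (∑ j ∈ range m, w j) * f n ≤ ∑ j ∈ range m, w j * f j := by
      rw [sum_mul]
      exact sum_le_sum fun j hj =>
        mul_le_mul_of_nonneg_left (hf (by rw [mem_range] at hj; omega)) (hw j)
    rw [sum_range_succ, sum_range_succ]
    nlinarith [mul_le_mul_of_nonneg_left hfn (hw n)]

theorem sum_range_natCast_mul_two (n : ℕ) : (∑ j ∈ range n, (j : ℝ)) * 2 = n * (n - 1) := by
  induction n with
  | zero => simp
  | succ n ih => rw [sum_range_succ, add_mul, ih]; push_cast; ring

noncomputable def lamDensity (b : ℕ) (x : ℝ) : ℝ :=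
  ∑ j ∈ range b, (j : ℝ) * (1 - x) ^ (j - 1)

theorem lamDensity_succ (b : ℕ) (x : ℝ) :
    lamDensity (b + 1) x = lamDensity b x + b * (1 - x) ^ (b - 1) :=
  sum_range_succ _ _

theorem sq_mul_lamDensity (b : ℕ) (x : ℝ) :
    x ^ 2 * lamDensity b x = 1 - (1 - x) ^ b - b * x * (1 - x) ^ (b - 1) := by
  induction b with
  | zero => simp [lamDensity]
  | succ b ih =>
    rw [lamDensity_succ, mul_add, ih]
    rcases b with _ | b
    · simp
    · push_cast; ring

theorem sq_mul_sum_choose (b : ℕ) (x : ℝ) :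
    x ^ 2 * ∑ k ∈ Icc 2 b, (b.choose k : ℝ) * (x ^ (k - 2) * (1 - x) ^ (b - k))
      = 1 - (1 - x) ^ b - b * x * (1 - x) ^ (b - 1) := by
  rcases b with _ | b
  · simp
  have hrange : range (b + 2) = insert 0 (insert 1 (Icc 2 (b + 1))) := by
    ext k; simp only [mem_range, mem_insert, mem_Icc]; omega
  have hbinom := add_pow x (1 - x) (b + 1)
  rw [add_sub_cancel, one_pow, hrange, sum_insert (by simp), sum_insert (by simp)] at hbinom
  simp only [pow_zero, Nat.sub_zero, Nat.choose_zero_right, Nat.cast_one, mul_one, one_mul,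
    pow_one, Nat.choose_one_right] at hbinom
  have hshift : x ^ 2 * ∑ k ∈ Icc 2 (b + 1),
        ((b + 1).choose k : ℝ) * (x ^ (k - 2) * (1 - x) ^ (b + 1 - k))
      = ∑ k ∈ Icc 2 (b + 1), x ^ k * (1 - x) ^ (b + 1 - k) * ((b + 1).choose k : ℝ) := by
    rw [mul_sum]
    refine sum_congr rfl fun k hk => ?_
    rw [← Nat.sub_add_cancel (mem_Icc.mp hk).1, pow_add, Nat.sub_add_cancel (mem_Icc.mp hk).1]
    ring
  rw [hshift]
  push_cast at hbinom ⊢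
  linarith

theorem sum_choose_eq_lamDensity (b : ℕ) (x : ℝ) :
    ∑ k ∈ Icc 2 b, (b.choose k : ℝ) * (x ^ (k - 2) * (1 - x) ^ (b - k)) = lamDensity b x := by
  -- equal after multiplying by `x²`, hence off `0`, hence everywhere by continuity
  refine congrFun (Continuous.ext_on (dense_compl_singleton 0)
    (f := fun y => ∑ k ∈ Icc 2 b, (b.choose k : ℝ) * (y ^ (k - 2) * (1 - y) ^ (b - k)))
    (g := lamDensity b) (by fun_prop) (by unfold lamDensity; fun_prop) fun y hy => ?_) x
  exact mul_left_cancel₀ (pow_ne_zero 2 hy)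
    ((sq_mul_sum_choose b y).trans (sq_mul_lamDensity b y).symm)

section lamDensity

variable {x : ℝ}

theorem lamDensity_nonneg (hx : x ∈ Set.Icc (0 : ℝ) 1) (b : ℕ) : 0 ≤ lamDensity b x :=
  sum_nonneg fun j _ => mul_nonneg j.cast_nonneg (pow_nonneg (by linarith [hx.2]) _)

theorem lamDensity_mono (hx : x ∈ Set.Icc (0 : ℝ) 1) : Monotone (lamDensity · x) :=
  fun _ _ hac =>
  sum_le_sum_of_subset_of_nonneg (range_mono hac) fun j _ _ =>
    mul_nonneg j.cast_nonneg (pow_nonneg (by linarith [hx.2]) _)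

theorem mul_lamDensity_le (hx : x ∈ Set.Icc (0 : ℝ) 1) {a c : ℕ} (hac : a ≤ c) :
    a * (a - 1) * lamDensity c x ≤ c * (c - 1) * lamDensity a x := by
  have hanti : Antitone fun j : ℕ => (1 - x) ^ (j - 1) :=
    (pow_right_anti₀ (by linarith [hx.2]) (by linarith [hx.1])).comp_monotone
      fun _ _ h => Nat.sub_le_sub_right h 1
  have h := sum_range_mul_sum_range_mul_le (fun j => Nat.cast_nonneg j) hanti hac
  rw [← sum_range_natCast_mul_two, ← sum_range_natCast_mul_two]
  unfold lamDensity
  linarith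

end lamDensity

theorem le_mul_natCeil_div (S : ℕ) {υ : ℕ} (hυ : 0 < υ) : S ≤ υ * ⌈(S : ℝ) / υ⌉₊ := by
  have h := Nat.le_ceil ((S : ℝ) / υ)
  rw [div_le_iff₀ (by exact_mod_cast hυ)] at h
  exact_mod_cast h.trans_eq (mul_comm _ _)

theorem mul_natCeil_div_sub_one_lt {S : ℕ} (hS : 0 < S) (υ : ℕ) :
    υ * (⌈(S : ℝ) / υ⌉₊ - 1) < S := by
  rcases Nat.eq_zero_or_pos υ with rfl | hυ
  · simpa using hS
  have h : ((⌈(S : ℝ) / υ⌉₊ - 1 : ℕ) : ℝ) < S / υ :=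
    Nat.lt_ceil.mp (Nat.sub_lt (Nat.ceil_pos.mpr (by positivity)) one_pos)
  rw [lt_div_iff₀ (by exact_mod_cast hυ)] at h
  exact_mod_cast (mul_comm _ _).trans_lt h

section lamB

variable (μ : Measure ℝ) [IsFiniteMeasureOnCompacts μ]

theorem lamB_eq_setIntegral (b : ℕ) :
    lamB μ b = ∫ x in Set.Icc (0:ℝ) 1, lamDensity b x ∂μ := by
  simp_rw [← sum_choose_eq_lamDensity]
  rw [integral_finsetSum _ fun k _ => Continuous.integrableOn_Icc (by fun_prop)]
  simp_rw [integral_const_mul]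
  rfl

theorem lamB_nonneg (b : ℕ) : 0 ≤ lamB μ b := by
  rw [lamB_eq_setIntegral]
  exact setIntegral_nonneg measurableSet_Icc fun x hx => lamDensity_nonneg hx b

theorem lamB_mono : Monotone (lamB μ) := fun a c hac => by
  simp only [lamB_eq_setIntegral]
  refine setIntegral_mono_on ?_ ?_ measurableSet_Icc fun x hx => lamDensity_mono hx hac <;>
    exact Continuous.integrableOn_Icc (by unfold lamDensity; fun_prop)

theorem mul_lamB_le {a c : ℕ} (hac : a ≤ c) :
    a * (a - 1) * lamB μ c ≤ c * (c - 1) * lamB μ a := by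
  simp only [lamB_eq_setIntegral, ← integral_const_mul]
  refine setIntegral_mono_on ?_ ?_ measurableSet_Icc fun x hx => mul_lamDensity_le hx hac <;>
    exact Continuous.integrableOn_Icc (by unfold lamDensity; fun_prop)

theorem lamB_le_pow_three_mul {m n υ : ℕ} (hm : 2 ≤ m) (hmn : m ≤ n) (hn : n ≤ υ * m) :
    lamB μ n ≤ υ ^ 3 * lamB μ m := by
  have hm' : (2 : ℝ) ≤ m := by exact_mod_cast hm
  have hn' : (n : ℝ) ≤ υ * m := by exact_mod_cast hn
  have hmn' : (m : ℝ) ≤ n := by exact_mod_cast hmn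
  have hυ : (1 : ℝ) ≤ υ := by nlinarith
  have hnn : (n : ℝ) * (n - 1) ≤ υ ^ 3 * (m * (m - 1)) := by
    have h1 : (n : ℝ) * (n - 1) ≤ υ * m * (υ * m - 1) := by nlinarith
    -- `υ²(m-1) - (υm - 1) = (υ-1)(υ(m-1) - 1)`
    have h2 : (υ : ℝ) * m - 1 ≤ υ ^ 2 * (m - 1) := by
      have : (0 : ℝ) ≤ (υ - 1) * (υ * (m - 1) - 1) := mul_nonneg (by linarith) (by nlinarith)
      nlinarith
    nlinarith [mul_le_mul_of_nonneg_left h2 (by positivity : (0 : ℝ) ≤ υ * m)]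
  refine le_of_mul_le_mul_left ?_ (by nlinarith : (0 : ℝ) < m * (m - 1))
  calc (m : ℝ) * (m - 1) * lamB μ n ≤ n * (n - 1) * lamB μ m := mul_lamB_le μ hmn
    _ ≤ υ ^ 3 * (m * (m - 1)) * lamB μ m := by gcongr; exact lamB_nonneg μ m
    _ = m * (m - 1) * (υ ^ 3 * lamB μ m) := by ring

end lamB

theorem lamB_spatial_estimate :
    ∃ ρ : ℝ, 1 ≤ ρ ∧
      ∀ (μ : Measure ℝ), IsFiniteMeasure μ → μ {0} = 0 → μ {1} = 0 →
        μ ((Set.Icc (0:ℝ) 1)ᶜ) = 0 → 0 < μ (Set.Icc (0:ℝ) 1) →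
        ∀ (υ : ℕ), 1 ≤ υ → ∀ b : Fin υ → ℕ, υ < ∑ i, b i →
          lamB μ ⌈((∑ i, b i : ℕ) : ℝ) / (υ : ℝ)⌉₊ ≤ (∑ i, lamB μ (b i)) ∧
            (∑ i, lamB μ (b i))
              ≤ (υ : ℝ) ^ ((1 : ℝ) + ρ) * lamB μ ⌈((∑ i, b i : ℕ) : ℝ) / (υ : ℝ)⌉₊ := by
  refine ⟨3, by norm_num, fun μ _ _ _ _ _ υ hυ b hS => ?_⟩
  set S := ∑ i, b i
  set m := ⌈(S : ℝ) / υ⌉₊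
  have hSm : S ≤ υ * m := le_mul_natCeil_div S hυ
  have hmS : υ * (m - 1) < S := mul_natCeil_div_sub_one_lt (by omega) υ
  have hm : 2 ≤ m := by by_contra h; interval_cases m <;> omega
  have hmS' : m ≤ S := by nlinarith [Nat.sub_add_cancel (by omega : 1 ≤ m)]
  obtain ⟨j, -, hj⟩ := exists_lt_of_sum_lt (s := univ) (f := fun _ => m - 1) (g := b)
    (by simpa using hmS)
  constructor
  · calc lamB μ m ≤ lamB μ (b j) := lamB_mono μ (by omega)
      _ ≤ ∑ i, lamB μ (b i) := single_le_sum (fun i _ => lamB_nonneg μ (b i)) (mem_univ j)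
  · calc ∑ i, lamB μ (b i) ≤ ∑ _i : Fin υ, lamB μ S :=
          sum_le_sum fun i _ => lamB_mono μ (single_le_sum (by simp) (mem_univ i))
      _ = υ * lamB μ S := by simp
      _ ≤ υ * (υ ^ 3 * lamB μ m) := by
          gcongr
          exact lamB_le_pow_three_mul μ hm hmS' hSm
      _ = υ ^ ((1 : ℝ) + 3) * lamB μ m := by
          rw [show (1 : ℝ) + 3 = (4 : ℕ) by norm_num, Real.rpow_natCast]; ring
end
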